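/- arXiv:2005.14575 — 4 statements merged into one kernel-verified Lean document; each statement's English description precedes it below -/
import Mathlib

section
/- Let N, n, m, q be natural numbers, let i be a fixed index in {1,...,N}, let y_1,...,y_m be vectors in ℝ^N, and let x_0, x_1, ..., x_{n-1} be vectors in ℝ^N each of which lies in the linear span of y_1,...,y_m. Let η(α,β) be arbitrary real coefficients for all nonnegative integers α, β with α+β ≤ q. Define the n×N real matrix F_{q,i} whose (k,j)-entry equals Σ_{α+β ≤ q} η(α,β) · ((x_k)_i)^α · ((x_k)_j)^β. Then the rank of F_{q,i} is at most Σ_{β=0}^{q} C(β+m-1, m-1), where C(·,·) denotes the binomial coefficient. -/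
open Finset Submodule

/-- Triangular sum swap. -/
lemma sum_triangle_comm {M : Type*} [AddCommMonoid M] (n : ℕ) (f : ℕ → ℕ → M) :
    ∑ a ∈ range (n+1), ∑ b ∈ range (n+1-a), f a b
      = ∑ b ∈ range (n+1), ∑ a ∈ range (n+1-b), f a b := by
  have key : ∀ g : ℕ → ℕ → M, ∀ a, ∑ b ∈ range (n+1-a), g a b
      = ∑ b ∈ range (n+1), if a + b ≤ n then g a b else 0 := by
    intro g a
    rw [Finset.sum_ite, Finset.sum_const_zero, add_zero]
    apply Finset.sum_congr _ (fun _ _ => rfl)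
    ext b
    simp only [Finset.mem_filter, Finset.mem_range]
    omega
  simp only [key]
  rw [Finset.sum_comm]
  refine Finset.sum_congr rfl fun b _ => ?_
  rw [key (fun b a => f a b) b]
  exact Finset.sum_congr rfl fun a _ => by rw [Nat.add_comm b a]

/-- Powers of a vector in the span of `y` lie in the span of degree-`β` monomials. -/
lemma pow_mem_span_monomials {N m : ℕ} (y : Fin m → (Fin N → ℝ))
    (w : Fin N → ℝ) (hw : w ∈ Submodule.span ℝ (Set.range y)) (β : ℕ) :
    (fun j => w j ^ β) ∈ Submodule.span ℝ
      (Set.range (fun s : Sym (Fin m) β =>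
        fun j => ((s : Multiset (Fin m)).map (fun l => y l j)).prod)) := by
  induction β with
  | zero =>
      apply subset_span
      exact ⟨Sym.nil, by funext j; simp⟩
  | succ β ih =>
      obtain ⟨c, hc⟩ := (mem_span_range_iff_exists_fun ℝ).1 hw
      have hwj : ∀ j, w j = ∑ l, c l * y l j := by
        intro j
        rw [← hc]
        simp [Finset.sum_apply]
      have hrw : (fun j => w j ^ (β+1))
          = ∑ l, c l • ((y l) * fun j => w j ^ β) := by
        funext j
        simp only [Finset.sum_apply, Pi.smul_apply, Pi.mul_apply, smul_eq_mul]
        rw [pow_succ, mul_comm, hwj j, Finset.sum_mul]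
        exact Finset.sum_congr rfl fun l _ => by ring
      rw [hrw]
      apply Submodule.sum_mem
      intro l _
      apply Submodule.smul_mem
      have hmap : (y l) * (fun j => w j ^ β)
          = LinearMap.mulLeft ℝ (y l) (fun j => w j ^ β) := rfl
      rw [hmap]
      have h1 : LinearMap.mulLeft ℝ (y l) (fun j => w j ^ β) ∈
          (Submodule.span ℝ (Set.range (fun s : Sym (Fin m) β =>
            fun j => ((s : Multiset (Fin m)).map (fun l => y l j)).prod))).map
            (LinearMap.mulLeft ℝ (y l)) := Submodule.mem_map_of_mem ih
      rw [Submodule.map_span] at h1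
      refine Submodule.span_le.2 ?_ h1
      rintro _ ⟨_, ⟨s, rfl⟩, rfl⟩
      apply subset_span
      refine ⟨l ::ₛ s, ?_⟩
      funext j
      simp [LinearMap.mulLeft_apply, Sym.coe_cons, Multiset.map_cons, Multiset.prod_cons]

lemma choose_aux (m β : ℕ) : (m + β - 1).choose β ≤ (β + m - 1).choose (m - 1) := by
  match m with
  | 0 =>
      match β with
      | 0 => simp
      | β+1 => simp [Nat.choose_eq_zero_of_lt]
  | m'+1 =>
      have h1 : m' + 1 + β - 1 = m' + β := by omega
      have h2 : β + (m' + 1) - 1 = m' + β := by omega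
      have h3 : m' + 1 - 1 = m' := by omega
      rw [h1, h2, h3]
      rw [← Nat.choose_symm (by omega : β ≤ m' + β)]
      simp [Nat.add_sub_cancel]

/-- **Proposition 2 (rank bound for the truncated Taylor matrix).**
If each observed nodal state vector `x k ∈ ℝ^N` lies in the span of `m` agitation
modes `y 1, ..., y m`, then the `n × N` matrix `F_{q,i}` with entries
`(F_{q,i})_{k j} = ∑_{α+β ≤ q} η(α,β) ((x_k)_i)^α ((x_k)_j)^β`
has rank at most `∑_{β=0}^{q} C(β+m-1, m-1)`. -/
theorem rank_truncated_taylor_matrix_le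
    (N n m q : ℕ) (i : Fin N)
    (y : Fin m → (Fin N → ℝ))
    (x : Fin n → (Fin N → ℝ))
    (hx : ∀ k, x k ∈ Submodule.span ℝ (Set.range y))
    (η : ℕ → ℕ → ℝ)
    (F : Matrix (Fin n) (Fin N) ℝ)
    (hF : ∀ k j, F k j =
      ∑ α ∈ Finset.range (q + 1), ∑ β ∈ Finset.range (q + 1 - α),
        η α β * (x k i) ^ α * (x k j) ^ β) :
    F.rank ≤ ∑ β ∈ Finset.range (q + 1), Nat.choose (β + m - 1) (m - 1) := by
  classical
  -- the collection of monomial vectors of degree ≤ q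
  set mono : (Σ β : Fin (q+1), Sym (Fin m) (β : ℕ)) → (Fin N → ℝ) :=
    fun p => fun j => ((p.2 : Multiset (Fin m)).map (fun l => y l j)).prod with hmono
  -- every row of F lies in the span of the monomials
  have hrow : ∀ k, F k ∈ Submodule.span ℝ (Set.range mono) := by
    intro k
    have hFk : F k = ∑ β ∈ Finset.range (q+1),
        (∑ α ∈ Finset.range (q+1-β), η α β * (x k i) ^ α) • (fun j => (x k j) ^ β) := by
      funext j
      have h1 : F k j = ∑ β ∈ Finset.range (q+1), ∑ α ∈ Finset.range (q+1-β),
          η α β * (x k i) ^ α * (x k j) ^ β := by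
        rw [hF k j, sum_triangle_comm]
      rw [h1]
      simp only [Finset.sum_apply, Pi.smul_apply, smul_eq_mul, Finset.sum_mul]
    rw [hFk]
    apply Submodule.sum_mem
    intro β hβ
    apply Submodule.smul_mem
    have hspan := pow_mem_span_monomials y (x k) (hx k) β
    refine Submodule.span_le.2 ?_ hspan
    rintro _ ⟨s, rfl⟩
    apply Submodule.subset_span
    exact ⟨⟨⟨β, Finset.mem_range.1 hβ⟩, s⟩, rfl⟩
  -- rank = dimension of row space ≤ card of monomials
  rw [Matrix.rank_eq_finrank_span_row]
  have h2 : Submodule.span ℝ (Set.range F) ≤ Submodule.span ℝ (Set.range mono) :=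
    Submodule.span_le.2 (by rintro _ ⟨k, rfl⟩; exact hrow k)
  calc Module.finrank ℝ (Submodule.span ℝ (Set.range F))
      ≤ Module.finrank ℝ (Submodule.span ℝ (Set.range mono)) := Submodule.finrank_mono h2
    _ ≤ Fintype.card (Σ β : Fin (q+1), Sym (Fin m) (β : ℕ)) := finrank_range_le_card mono
    _ = ∑ β : Fin (q+1), Fintype.card (Sym (Fin m) (β : ℕ)) := Fintype.card_sigma
    _ = ∑ β ∈ Finset.range (q+1), Fintype.card (Sym (Fin m) β) := by
        rw [Finset.sum_range fun β => Fintype.card (Sym (Fin m) β)]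
    _ ≤ ∑ β ∈ Finset.range (q+1), Nat.choose (β + m - 1) (m - 1) := by
        apply Finset.sum_le_sum
        intro β _
        rw [Sym.card_sym_eq_choose, Fintype.card_fin]
        exact choose_aux m β
end

section
/- Let y_1,...,y_m be vectors in ℝ^N and let β be a natural number. Then the linear subspace of ℝ^N spanned by the set { x^β : x ∈ span(y_1,...,y_m) } of entrywise β-th powers of vectors in the span of y_1,...,y_m has dimension at most C(β+m-1, m-1), the binomial coefficient counting m-tuples of nonnegative integers summing to β. -/
lemma card_piAntidiag_le (m β : ℕ) :
    (Finset.piAntidiag (Finset.univ : Finset (Fin m)) β).card ≤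
      Nat.choose (β + m - 1) (m - 1) := by
  have h1 : (Finset.piAntidiag (Finset.univ : Finset (Fin m)) β).card
      = Fintype.card (Sym (Fin m) β) := by
    rw [← Finset.map_sym_eq_piAntidiag, Finset.card_map, Finset.sym_univ,
      Finset.card_univ]
  rw [h1, Sym.card_sym_eq_choose, Fintype.card_fin]
  rcases Nat.eq_zero_or_pos m with hm | hm
  · subst hm
    rcases Nat.eq_zero_or_pos β with hβ | hβ
    · simp [hβ]
    · rw [Nat.choose_eq_zero_of_lt (by omega)]
      exact Nat.zero_le _
  · have : m + β - 1 = β + m - 1 := by omega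
    rw [this, ← Nat.choose_symm (show β ≤ β + m - 1 by omega)]
    have : β + m - 1 - β = m - 1 := by omega
    rw [this]

/-- **Dimension bound for entrywise powers of a low-dimensional subspace.**
The span of `{ x^β : x ∈ span(y_1, ..., y_m) }` (entrywise `β`-th powers) has
dimension at most `C(β+m-1, m-1)`, the number of `m`-tuples of nonnegative
integers summing to `β`. -/
theorem finrank_span_entrywise_pow_le
    (N m : ℕ) (y : Fin m → (Fin N → ℝ)) (β : ℕ) :
    Module.finrank ℝ
      (Submodule.span ℝ
        { v : Fin N → ℝ | ∃ x ∈ Submodule.span ℝ (Set.range y),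
            v = fun j => (x j) ^ β }) ≤
      Nat.choose (β + m - 1) (m - 1) := by
  classical
  set g : (Fin m → ℕ) → (Fin N → ℝ) :=
    fun k j => ∏ i, (y i j) ^ (k i) with hg
  set T : Finset (Fin N → ℝ) :=
    (Finset.piAntidiag (Finset.univ : Finset (Fin m)) β).image g with hT
  have hsub : { v : Fin N → ℝ | ∃ x ∈ Submodule.span ℝ (Set.range y),
      v = fun j => (x j) ^ β } ⊆ (Submodule.span ℝ (T : Set (Fin N → ℝ)) : Set (Fin N → ℝ)) := by
    rintro v ⟨x, hx, rfl⟩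
    rw [Submodule.mem_span_range_iff_exists_fun] at hx
    obtain ⟨c, rfl⟩ := hx
    have hv : (fun j => ((∑ i, c i • y i) j) ^ β)
        = ∑ k ∈ Finset.piAntidiag (Finset.univ : Finset (Fin m)) β,
            ((Nat.multinomial Finset.univ k : ℝ) * ∏ i, (c i) ^ (k i)) • g k := by
      funext j
      simp only [Finset.sum_apply, Pi.smul_apply, smul_eq_mul, hg]
      rw [Finset.sum_pow_eq_sum_piAntidiag]
      refine Finset.sum_congr rfl fun k hk => ?_
      rw [mul_assoc, ← Finset.prod_mul_distrib]
      simp [mul_pow]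
    rw [hv]
    refine Submodule.sum_mem _ fun k hk => Submodule.smul_mem _ _ ?_
    exact Submodule.subset_span (Finset.mem_image.2 ⟨k, hk, rfl⟩)
  calc
    Module.finrank ℝ (Submodule.span ℝ { v : Fin N → ℝ | ∃ x ∈ Submodule.span ℝ (Set.range y),
        v = fun j => (x j) ^ β })
        ≤ Module.finrank ℝ (Submodule.span ℝ (T : Set (Fin N → ℝ))) :=
      Submodule.finrank_mono (Submodule.span_le.2 hsub)
    _ ≤ T.card := by
        simpa using finrank_span_le_card (R := ℝ) (T : Set (Fin N → ℝ))
    _ ≤ (Finset.piAntidiag (Finset.univ : Finset (Fin m)) β).card :=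
      Finset.card_image_le
    _ ≤ Nat.choose (β + m - 1) (m - 1) := card_piAntidiag_le m β
end

section
/- Let y_1,...,y_m be vectors in ℝ^N, let x_0,...,x_{n-1} be vectors in ℝ^N each lying in the span of y_1,...,y_m, and fix an index i ∈ {1,...,N}. For the SIS interaction function g(u,v) = (1-u)·v, the n×N real matrix F_i with (k,j)-entry (1-(x_k)_i)·(x_k)_j has rank at most 1 + m + m(m+1)/2. -/
open Finset

/-- **Rank bound for the SIS interaction matrix.**
For the SIS interaction function `g(u,v) = (1-u)·v`, if every observed nodal
state `x k` lies in the span of `m` vectors `y_1, ..., y_m`, then the matrix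
`F_i` with entries `(1-(x_k)_i)·(x_k)_j` has rank at most `1 + m + m(m+1)/2`. -/
theorem rank_SIS_interaction_matrix_le
    (N n m : ℕ) (i : Fin N)
    (y : Fin m → (Fin N → ℝ))
    (x : Fin n → (Fin N → ℝ))
    (hx : ∀ k, x k ∈ Submodule.span ℝ (Set.range y))
    (F : Matrix (Fin n) (Fin N) ℝ)
    (hF : ∀ k j, F k j = (1 - x k i) * x k j) :
    F.rank ≤ 1 + m + m * (m + 1) / 2 := by
  classical
  set v : (Fin m ⊕ Sym2 (Fin m)) → (Fin N → ℝ) :=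
    Sum.elim y (fun s =>
      Sym2.lift ⟨fun α β => y α i • y β + y β i • y α,
        fun α β => by dsimp only; rw [add_comm]⟩ s) with hv
  have hle : Submodule.span ℝ (Set.range F) ≤ Submodule.span ℝ (Set.range v) := by
    rw [Submodule.span_le]
    rintro _ ⟨k, rfl⟩
    obtain ⟨c, hc⟩ := (Submodule.mem_span_range_iff_exists_fun ℝ).mp (hx k)
    have hFk : F k = (∑ α, c α • y α)
        - (1/2 : ℝ) • ∑ α, ∑ β, (c α * c β) • v (Sum.inr s(α, β)) := by
      funext j
      have hi : x k i = ∑ α, c α * y α i := by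
        rw [← hc]; simp [Finset.sum_apply]
      have hj : x k j = ∑ α, c α * y α j := by
        rw [← hc]; simp [Finset.sum_apply]
      have h2 : ∑ α, ∑ β, (c α * c β) * (y α i * y β j + y β i * y α j)
          = (∑ α, ∑ β, (c α * y α i) * (c β * y β j))
            + ∑ α, ∑ β, (c α * y α i) * (c β * y β j) := by
        simp only [mul_add, Finset.sum_add_distrib]
        congr 1
        · exact Finset.sum_congr rfl fun α _ =>
            Finset.sum_congr rfl fun β _ => by ring
        · rw [Finset.sum_comm]
          exact Finset.sum_congr rfl fun α _ =>
            Finset.sum_congr rfl fun β _ => by ring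
      simp only [Pi.sub_apply, Pi.smul_apply, Finset.sum_apply, Pi.add_apply,
        smul_eq_mul, hv, Sum.elim_inr, Sym2.lift_mk]
      rw [hF, hi, hj, sub_mul, one_mul, Finset.sum_mul_sum]
      rw [show (∑ α, ∑ β, (c α * c β) * ((y α i * y β j) + (y β i * y α j)))
        = _ from h2]
      ring
    rw [hFk]
    refine Submodule.sub_mem _ ?_ (Submodule.smul_mem _ _ ?_)
    · exact Submodule.sum_mem _ fun α _ =>
        Submodule.smul_mem _ _ (Submodule.subset_span ⟨Sum.inl α, rfl⟩)
    · exact Submodule.sum_mem _ fun α _ => Submodule.sum_mem _ fun β _ =>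
        Submodule.smul_mem _ _ (Submodule.subset_span ⟨Sum.inr s(α, β), rfl⟩)
  have hcard : Fintype.card (Fin m ⊕ Sym2 (Fin m)) ≤ 1 + m + m * (m + 1) / 2 := by
    rw [Fintype.card_sum, Fintype.card_fin, Sym2.card, Fintype.card_fin,
      Nat.choose_two_right]
    have : (m + 1) * (m + 1 - 1) / 2 = m * (m + 1) / 2 := by
      rw [Nat.add_sub_cancel, Nat.mul_comm]
    omega
  calc F.rank = Module.finrank ℝ (Submodule.span ℝ (Set.range F)) :=
        F.rank_eq_finrank_span_row
    _ ≤ Module.finrank ℝ (Submodule.span ℝ (Set.range v)) :=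
        Submodule.finrank_mono hle
    _ ≤ Fintype.card (Fin m ⊕ Sym2 (Fin m)) := finrank_range_le_card v
    _ ≤ 1 + m + m * (m + 1) / 2 := hcard
end

section
/- Let F be an n×N real matrix, V ∈ ℝ^n, and ρ a real number with ρ ≥ 2·‖FᵀV‖_∞, where ‖·‖_∞ is the maximum absolute entry of a vector in ℝ^N. Then for every a ∈ ℝ^N with nonnegative entries, ‖V − Fa‖₂² + ρ·Σ_{j=1}^N a_j ≥ ‖V‖₂²; in particular, the zero vector a = 0 minimizes the LASSO objective ‖V − Fa‖₂² + ρ·Σ_j a_j over the nonnegative orthant. Moreover, if ρ > 2·‖FᵀV‖_∞, then a = 0 is the unique such minimizer. -/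
lemma euclid_sq (n : ℕ) (x : Fin n → ℝ) :
    ‖(WithLp.equiv 2 (Fin n → ℝ)).symm x‖ ^ 2 = ∑ k, x k ^ 2 := by
  rw [EuclideanSpace.norm_eq, Real.sq_sqrt (by positivity)]
  simp [sq_abs]

/-- **Threshold for the empty-network LASSO solution.**
If `ρ ≥ 2‖FᵀV‖_∞` (with `‖·‖_∞` the maximum absolute entry, i.e. the sup norm on
`ℝ^N`), then every nonnegative `a` satisfies `‖V − Fa‖₂² + ρ ∑_j a_j ≥ ‖V‖₂²`, so
`a = 0` minimises the LASSO objective over the nonnegative orthant; and if the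
inequality `ρ > 2‖FᵀV‖_∞` is strict, then `a = 0` is the unique such minimiser. -/
theorem lasso_zero_solution_threshold
    (n N : ℕ) (F : Matrix (Fin n) (Fin N) ℝ) (V : Fin n → ℝ) (ρ : ℝ)
    (hρ : 2 * ‖F.transpose.mulVec V‖ ≤ ρ)
    (lasso : (Fin N → ℝ) → ℝ)
    (hlasso : ∀ a, lasso a =
      ‖(WithLp.equiv 2 (Fin n → ℝ)).symm (fun k => V k - F.mulVec a k)‖ ^ 2 +
        ρ * ∑ j, a j) :
    (∀ a : Fin N → ℝ, (∀ j, 0 ≤ a j) →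
        ‖(WithLp.equiv 2 (Fin n → ℝ)).symm V‖ ^ 2 ≤ lasso a) ∧
      (2 * ‖F.transpose.mulVec V‖ < ρ →
        ∀ a : Fin N → ℝ, (∀ j, 0 ≤ a j) →
          (∀ b : Fin N → ℝ, (∀ j, 0 ≤ b j) → lasso a ≤ lasso b) → a = 0) := by
  set M := ‖F.transpose.mulVec V‖ with hM
  -- key expansion
  have key : ∀ a : Fin N → ℝ,
      lasso a = ∑ k, V k ^ 2 + (∑ k, F.mulVec a k ^ 2
        - 2 * ∑ j, F.transpose.mulVec V j * a j + ρ * ∑ j, a j) := by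
    intro a
    rw [hlasso, euclid_sq]
    have hswap : ∑ j, F.transpose.mulVec V j * a j = ∑ k, V k * F.mulVec a k := by
      simp only [Matrix.mulVec, dotProduct, Matrix.transpose_apply,
        Finset.sum_mul, Finset.mul_sum]
      rw [Finset.sum_comm]
      congr 1; ext j; congr 1; ext k; ring
    rw [hswap]
    have : ∀ k, (V k - F.mulVec a k) ^ 2
        = V k ^ 2 - 2 * (V k * F.mulVec a k) + F.mulVec a k ^ 2 := by
      intro k; ring
    simp only [this, Finset.sum_add_distrib, Finset.sum_sub_distrib, Finset.mul_sum]
    ring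
  -- bound on the cross term
  have hcross : ∀ a : Fin N → ℝ, (∀ j, 0 ≤ a j) →
      ∑ j, F.transpose.mulVec V j * a j ≤ M * ∑ j, a j := by
    intro a ha
    rw [Finset.mul_sum]
    apply Finset.sum_le_sum
    intro j _
    have h1 : F.transpose.mulVec V j ≤ M := by
      calc F.transpose.mulVec V j ≤ |F.transpose.mulVec V j| := le_abs_self _
        _ ≤ M := by
          have := norm_le_pi_norm (F.transpose.mulVec V) j
          simpa [hM, Real.norm_eq_abs] using this
    exact mul_le_mul_of_nonneg_right h1 (ha j)
  have hmain : ∀ a : Fin N → ℝ, (∀ j, 0 ≤ a j) →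
      ∑ k, V k ^ 2 + (ρ - 2 * M) * ∑ j, a j ≤ lasso a := by
    intro a ha
    rw [key a]
    have h1 : 0 ≤ ∑ k, F.mulVec a k ^ 2 := by positivity
    have h2 := hcross a ha
    nlinarith [hcross a ha]
  have hV : ‖(WithLp.equiv 2 (Fin n → ℝ)).symm V‖ ^ 2 = ∑ k, V k ^ 2 := euclid_sq n V
  have hSnn : ∀ a : Fin N → ℝ, (∀ j, 0 ≤ a j) → (0:ℝ) ≤ ∑ j, a j := by
    intro a ha; exact Finset.sum_nonneg fun j _ => ha j
  constructor
  · intro a ha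
    have := hmain a ha
    have hS := hSnn a ha
    rw [hV]
    nlinarith
  · intro hstrict a ha hmin
    have h0 : lasso a ≤ lasso 0 := hmin 0 (fun j => le_rfl)
    have hl0 : lasso 0 = ∑ k, V k ^ 2 := by
      rw [key 0]; simp [Matrix.mulVec_zero]
    have := hmain a ha
    have hS := hSnn a ha
    have hsum0 : ∑ j, a j = 0 := by nlinarith
    funext j
    have := (Finset.sum_eq_zero_iff_of_nonneg (fun j _ => ha j)).mp hsum0 j (Finset.mem_univ j)
    simpa using this
end
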